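/- Let d ≥ 2 be an integer, n ∈ R, and t a positive integer. For ℓ = 0,…,t−1 let D_{nℓ}(c) := (1/ℓ!) ∂^ℓ_ε D_n(c,0) and E_{nℓ}(c) := (1/ℓ!) ∂^ℓ_ε E_n(c,0). Suppose λ, Λ, μ, M ∈ R are such that for all (c,ε) ∈ [−1,1] × [0,1/2]: λ ε^t ≤ D_n(c,ε) − Σ_{ℓ=0}^{t−1} D_{nℓ}(c) ε^ℓ ≤ Λ ε^t and μ ε^t ≤ E_n(c,ε) − Σ_{ℓ=0}^{t−1} E_{nℓ}(c) ε^ℓ ≤ M ε^t. Then for all h, k ∈ R^d \ {0} with h ≠ k and |k| ≥ 2|h|, writing c := (h·k)/(|h||k|) and ε := |h|/|k|: |h|^{−(2n−2)} [ Σ_{ℓ=0}^{t−1} D_{nℓ}(c) ε^ℓ + λ ε^t + (1 − |h|^n/|k|^n)² ( Σ_{ℓ=0}^{t−1} E_{nℓ}(c) ε^ℓ + μ ε^t ) ] ≤ |h ∧ k|² [ (|k|^n − |k−h|^n)²/(|h|^{2n+2}|k−h|^{2n}) + (|k|^n − |h|^n)²/(|h|^{2n}|k−h|^{2n+2}) ]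 ≤ |h|^{−(2n−2)} [ Σ_{ℓ=0}^{t−1} D_{nℓ}(c) ε^ℓ + Λ ε^t + (1 − |h|^n/|k|^n)² ( Σ_{ℓ=0}^{t−1} E_{nℓ}(c) ε^ℓ + M ε^t ) ]. -/
import Mathlib


noncomputable section

/-- Euclidean norm on `ℝ^d` (written out). -/
def rnorm {d : ℕ} (p : Fin d → ℝ) : ℝ := Real.sqrt (∑ i, p i ^ 2)

/-- Squared norm `|p ∧ q|² = |p|²|q|² − (p·q)²` of the exterior product. -/
def rwedgeSq {d : ℕ} (p q : Fin d → ℝ) : ℝ :=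
  (∑ i, p i ^ 2) * (∑ i, q i ^ 2) - (∑ i, p i * q i) ^ 2

/-- The function `D_n` of the paper, defined piecewise at `ε = 0`. -/
def Dfun (n c ε : ℝ) : ℝ :=
  if ε = 0 then n ^ 2 * (c ^ 2 - c ^ 4)
  else (1 - c ^ 2) * (1 - (1 - 2 * c * ε + ε ^ 2) ^ (n / 2)) ^ 2 /
    (ε ^ 2 * (1 - 2 * c * ε + ε ^ 2) ^ n)

/-- The function `E_n` of the paper. -/
def Efun (n c ε : ℝ) : ℝ := (1 - c ^ 2) / (1 - 2 * c * ε + ε ^ 2) ^ (n + 1)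

/-- The Taylor coefficient `D_{nℓ}(c) = (1/ℓ!) ∂^ℓ_ε D_n(c,0)`. -/
def DTaylor (n : ℝ) (ℓ : ℕ) (c : ℝ) : ℝ :=
  iteratedDeriv ℓ (fun ε => Dfun n c ε) 0 / (Nat.factorial ℓ)

/-- The Taylor coefficient `E_{nℓ}(c) = (1/ℓ!) ∂^ℓ_ε E_n(c,0)`. -/
def ETaylor (n : ℝ) (ℓ : ℕ) (c : ℝ) : ℝ :=
  iteratedDeriv ℓ (fun ε => Efun n c ε) 0 / (Nat.factorial ℓ)

lemma rnorm_pos {d : ℕ} {p : Fin d → ℝ} (hp : p ≠ 0) : 0 < rnorm p := by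
  have hne : ∃ i, p i ≠ 0 := by
    by_contra hcon
    push_neg at hcon
    exact hp (funext fun i => hcon i)
  obtain ⟨i, hi⟩ := hne
  have : 0 < ∑ j, p j ^ 2 :=
    Finset.sum_pos' (fun j _ => sq_nonneg _) ⟨i, Finset.mem_univ i, by positivity⟩
  exact Real.sqrt_pos.mpr this

lemma rnorm_sq {d : ℕ} (p : Fin d → ℝ) : rnorm p ^ 2 = ∑ i, p i ^ 2 :=
  Real.sq_sqrt (Finset.sum_nonneg fun i _ => sq_nonneg _)

lemma sub_sq_sum {d : ℕ} (h k : Fin d → ℝ) :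
    rnorm (k - h) ^ 2 = rnorm k ^ 2 - 2 * (∑ i, h i * k i) + rnorm h ^ 2 := by
  rw [rnorm_sq, rnorm_sq, rnorm_sq]
  have he : ∀ i, ((k - h) i) ^ 2 = k i ^ 2 - 2 * (h i * k i) + h i ^ 2 := by
    intro i; simp [Pi.sub_apply]; ring
  simp only [he]
  rw [Finset.sum_add_distrib, Finset.sum_sub_distrib, ← Finset.mul_sum]

lemma key (n a b r s : ℝ) (ha : 0 < a) (hb : 0 < b) (hr : 0 < r)
    (hrel : r ^ 2 = b ^ 2 - 2 * s + a ^ 2) :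
    (a ^ 2 * b ^ 2 - s ^ 2) *
        ((b ^ n - r ^ n) ^ 2 / (a ^ (2 * n + 2) * r ^ (2 * n)) +
          (b ^ n - a ^ n) ^ 2 / (a ^ (2 * n) * r ^ (2 * n + 2)))
      = a ^ (-(2 * n - 2)) *
        (Dfun n (s / (a * b)) (a / b) +
          (1 - a ^ n / b ^ n) ^ 2 * Efun n (s / (a * b)) (a / b)) := by
  have hεne : a / b ≠ 0 := by positivity
  rw [Dfun, if_neg hεne, Efun]
  have h1 : 1 - 2 * (s / (a * b)) * (a / b) + (a / b) ^ 2 = r ^ 2 / b ^ 2 := by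
    rw [hrel]; field_simp
  rw [h1]
  set A := a ^ n with hA
  set B := b ^ n with hB
  set R := r ^ n with hR
  have hApos : 0 < A := Real.rpow_pos_of_pos ha n
  have hBpos : 0 < B := Real.rpow_pos_of_pos hb n
  have hRpos : 0 < R := Real.rpow_pos_of_pos hr n
  have e1 : (r ^ 2 / b ^ 2) ^ (n / 2) = R / B := by
    have h2 : r ^ 2 / b ^ 2 = (r / b) ^ 2 := by ring
    rw [h2, ← Real.rpow_natCast (r / b) 2, ← Real.rpow_mul (by positivity)]
    push_cast
    have : (2 : ℝ) * (n / 2) = n := by ring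
    rw [this, Real.div_rpow hr.le hb.le]
  have e2 : (r ^ 2 / b ^ 2) ^ n = R ^ 2 / B ^ 2 := by
    have h2 : r ^ 2 / b ^ 2 = (r / b) ^ 2 := by ring
    rw [h2, ← Real.rpow_natCast (r / b) 2, ← Real.rpow_mul (by positivity)]
    push_cast
    rw [mul_comm, Real.rpow_mul (by positivity), Real.div_rpow hr.le hb.le,
      Real.rpow_two, div_pow]
  have e3 : (r ^ 2 / b ^ 2) ^ (n + 1) = R ^ 2 * r ^ 2 / (B ^ 2 * b ^ 2) := by
    rw [Real.rpow_add (by positivity), e2, Real.rpow_one]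
    field_simp
  have e6 : ∀ x : ℝ, 0 < x → x ^ (2 * n) = (x ^ n) ^ 2 := by
    intro x hx
    rw [two_mul, Real.rpow_add hx]; ring
  have e4 : a ^ (2 * n + 2) = A ^ 2 * a ^ 2 := by
    rw [Real.rpow_add ha, e6 a ha, Real.rpow_two]
  have e7 : r ^ (2 * n + 2) = R ^ 2 * r ^ 2 := by
    rw [Real.rpow_add hr, e6 r hr, Real.rpow_two]
  have e8 : a ^ (-(2 * n - 2)) = a ^ 2 / A ^ 2 := by
    have : -(2 * n - 2) = 2 + -(2 * n) := by ring
    rw [this, Real.rpow_add ha, Real.rpow_neg ha.le, e6 a ha, Real.rpow_two]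
    ring
  rw [e1, e2, e3, e4, e7, e8, e6 r hr, e6 a ha, ← hA, ← hR]
  field_simp

/-- two-sided Taylor-remainder bounds for `D_n, E_n` on
`[−1,1] × [0,1/2]` transfer to two-sided bounds for the combination of
statement 11, for `h, k ∈ ℝ^d \ {0}`, `h ≠ k`, `|k| ≥ 2|h|`. -/
theorem stmt12 (d : ℕ) (hd : 2 ≤ d) (n : ℝ) (t : ℕ) (ht : 0 < t)
    (lam Lam mu M : ℝ)
    (hD : ∀ c ∈ Set.Icc (-1 : ℝ) 1, ∀ ε ∈ Set.Icc (0 : ℝ) (1 / 2),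
      lam * ε ^ t ≤ Dfun n c ε - ∑ ℓ ∈ Finset.range t, DTaylor n ℓ c * ε ^ ℓ ∧
      Dfun n c ε - ∑ ℓ ∈ Finset.range t, DTaylor n ℓ c * ε ^ ℓ ≤ Lam * ε ^ t)
    (hE : ∀ c ∈ Set.Icc (-1 : ℝ) 1, ∀ ε ∈ Set.Icc (0 : ℝ) (1 / 2),
      mu * ε ^ t ≤ Efun n c ε - ∑ ℓ ∈ Finset.range t, ETaylor n ℓ c * ε ^ ℓ ∧
      Efun n c ε - ∑ ℓ ∈ Finset.range t, ETaylor n ℓ c * ε ^ ℓ ≤ M * ε ^ t)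
    (h k : Fin d → ℝ) (hh : h ≠ 0) (hk : k ≠ 0) (hhk : h ≠ k)
    (hkh : 2 * rnorm h ≤ rnorm k) :
    rnorm h ^ (-(2 * n - 2)) *
        ((∑ ℓ ∈ Finset.range t,
            DTaylor n ℓ ((∑ i, h i * k i) / (rnorm h * rnorm k)) * (rnorm h / rnorm k) ^ ℓ) +
          lam * (rnorm h / rnorm k) ^ t +
          (1 - rnorm h ^ n / rnorm k ^ n) ^ 2 *
            ((∑ ℓ ∈ Finset.range t,
                ETaylor n ℓ ((∑ i, h i * k i) / (rnorm h * rnorm k)) * (rnorm h / rnorm k) ^ ℓ) +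
              mu * (rnorm h / rnorm k) ^ t))
      ≤ rwedgeSq h k *
          ((rnorm k ^ n - rnorm (k - h) ^ n) ^ 2 /
              (rnorm h ^ (2 * n + 2) * rnorm (k - h) ^ (2 * n)) +
            (rnorm k ^ n - rnorm h ^ n) ^ 2 /
              (rnorm h ^ (2 * n) * rnorm (k - h) ^ (2 * n + 2))) ∧
    rwedgeSq h k *
        ((rnorm k ^ n - rnorm (k - h) ^ n) ^ 2 /
            (rnorm h ^ (2 * n + 2) * rnorm (k - h) ^ (2 * n)) +
          (rnorm k ^ n - rnorm h ^ n) ^ 2 /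
            (rnorm h ^ (2 * n) * rnorm (k - h) ^ (2 * n + 2)))
      ≤ rnorm h ^ (-(2 * n - 2)) *
          ((∑ ℓ ∈ Finset.range t,
              DTaylor n ℓ ((∑ i, h i * k i) / (rnorm h * rnorm k)) * (rnorm h / rnorm k) ^ ℓ) +
            Lam * (rnorm h / rnorm k) ^ t +
            (1 - rnorm h ^ n / rnorm k ^ n) ^ 2 *
              ((∑ ℓ ∈ Finset.range t,
                  ETaylor n ℓ ((∑ i, h i * k i) / (rnorm h * rnorm k)) * (rnorm h / rnorm k) ^ ℓ) +
                M * (rnorm h / rnorm k) ^ t)) := by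
  have ha : 0 < rnorm h := rnorm_pos hh
  have hb : 0 < rnorm k := rnorm_pos hk
  have hr : 0 < rnorm (k - h) := rnorm_pos (sub_ne_zero.mpr (Ne.symm hhk))
  set a := rnorm h with hadef
  set b := rnorm k with hbdef
  set r := rnorm (k - h) with hrdef
  set s := ∑ i, h i * k i with hsdef
  have hrel : r ^ 2 = b ^ 2 - 2 * s + a ^ 2 := sub_sq_sum h k
  have hcs : s ^ 2 ≤ a ^ 2 * b ^ 2 := by
    have := Finset.sum_mul_sq_le_sq_mul_sq Finset.univ h k
    rw [hadef, hbdef, rnorm_sq, rnorm_sq]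
    exact this
  have hW : rwedgeSq h k = a ^ 2 * b ^ 2 - s ^ 2 := by
    rw [rwedgeSq, hadef, hbdef, rnorm_sq, rnorm_sq, hsdef]
  have hc : s / (a * b) ∈ Set.Icc (-1 : ℝ) 1 := by
    constructor
    · rw [le_div_iff₀ (by positivity)]
      nlinarith [sq_nonneg (s + a * b), mul_pos ha hb]
    · rw [div_le_one (by positivity)]
      nlinarith [sq_nonneg (s - a * b), mul_pos ha hb]
  have hε : a / b ∈ Set.Icc (0 : ℝ) (1 / 2) := by
    constructor
    · positivity
    · rw [div_le_iff₀ hb]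
      linarith
  obtain ⟨hD1, hD2⟩ := hD _ hc _ hε
  obtain ⟨hE1, hE2⟩ := hE _ hc _ hε
  have hkey := key n a b r s ha hb hr hrel
  rw [hW]
  have hq : (0 : ℝ) ≤ (1 - a ^ n / b ^ n) ^ 2 := sq_nonneg _
  have hpow : (0 : ℝ) ≤ a ^ (-(2 * n - 2)) := Real.rpow_nonneg ha.le _
  constructor
  · rw [hkey]
    apply mul_le_mul_of_nonneg_left _ hpow
    have h3 : (1 - a ^ n / b ^ n) ^ 2 *
        ((∑ ℓ ∈ Finset.range t, ETaylor n ℓ (s / (a * b)) * (a / b) ^ ℓ) + mu * (a / b) ^ t)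
        ≤ (1 - a ^ n / b ^ n) ^ 2 * Efun n (s / (a * b)) (a / b) :=
      mul_le_mul_of_nonneg_left (by linarith) hq
    linarith
  · rw [hkey]
    apply mul_le_mul_of_nonneg_left _ hpow
    have h3 : (1 - a ^ n / b ^ n) ^ 2 * Efun n (s / (a * b)) (a / b)
        ≤ (1 - a ^ n / b ^ n) ^ 2 *
        ((∑ ℓ ∈ Finset.range t, ETaylor n ℓ (s / (a * b)) * (a / b) ^ ℓ) + M * (a / b) ^ t) :=
      mul_le_mul_of_nonneg_left (by linarith) hq
    linarith
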